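/- Let F be a group, let G₁,…,G_k be irreducible F-groups such that G_i and G_j are not isomorphic as F-groups for i ≠ j, let m₁,…,m_k be non-negative integers, and let N be a normal F-subgroup of ∏_{i=1}^k G_i^{m_i}. Then N = ∏_{i=1}^k G_i^{m_i} if and only if for every i the image of N under the projection onto the block G_i^{m_i} is all of G_i^{m_i}. -/

import Mathlib

/-!
Index the product by pairs `(i, j)`, so that it is a finite product of irreducible `F`-groups.
If `S` is a set of coordinates maximal with `N ∩ ∏_S = 1`, irreducibility of the factors forces
`N · ∏_S` to be everything, so a proper `N` lies in the kernel of an `F`-epimorphism `φ` onto a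
factor `G i`: project onto `∏_S` along `N`, then onto a coordinate. If moreover `N` maps onto the
block `G i ^ m i`, then `φ` stays onto on the product of the other blocks. There the image of each
factor is a normal `F`-subgroup of the irreducible `G i`, so some factor `G i'` with `i' ≠ i`
maps isomorphically onto `G i`, contradicting the pairwise non-isomorphism.
-/

section FGroupDefs

variable (F : Type*) [Group F]

/-- A subgroup of an `F`-group is a *normal `F`-subgroup* if it is normal and
stable under the `F`-action. -/
def IsNormalFSubgroup {G : Type*} [Group G] [MulDistribMulAction F G]
    (H : Subgroup G) : Prop :=
  H.Normal ∧ ∀ (f : F) (x : G), x ∈ H → f • x ∈ H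

/-- An *irreducible `F`-group* is a nontrivial `F`-group whose only normal
`F`-subgroups are the trivial subgroup and the whole group. -/
def IsIrreducibleFGroup (G : Type*) [Group G] [MulDistribMulAction F G] : Prop :=
  Nontrivial G ∧ ∀ H : Subgroup G, IsNormalFSubgroup F H → H = ⊥ ∨ H = ⊤

/-- `[s]_F`: the smallest normal `F`-subgroup containing the set `s`. -/
def normalFClosure {G : Type*} [Group G] [MulDistribMulAction F G] (s : Set G) :
    Subgroup G :=
  sInf {H : Subgroup G | IsNormalFSubgroup F H ∧ s ⊆ H}

/-- A group homomorphism is an `F`-group morphism if it commutes with the `F`-actions. -/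
def IsFHom {G G' : Type*} [Group G] [Group G'] [MulDistribMulAction F G]
    [MulDistribMulAction F G'] (φ : G →* G') : Prop :=
  ∀ (f : F) (x : G), φ (f • x) = f • φ x

/-- `h_F(G)`: the number of `F`-group endomorphisms of `G`. -/
noncomputable def hF (G : Type*) [Group G] [MulDistribMulAction F G] : ℕ :=
  Nat.card {φ : G →* G // IsFHom F φ}

/-- Two `F`-groups are isomorphic if there is a bijective group homomorphism
between them commuting with the `F`-actions. -/
def IsFIso (G G' : Type*) [Group G] [Group G'] [MulDistribMulAction F G]
    [MulDistribMulAction F G'] : Prop :=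
  ∃ e : G ≃* G', ∀ (f : F) (x : G), e (f • x) = f • e x

end FGroupDefs

open Subgroup Function

section Complements

variable {G G' : Type*} [Group G] [Group G'] {N L : Subgroup G}

theorem exists_mul_eq_of_isCompl [N.Normal] (hNL : IsCompl N L) (x : G) :
    ∃ n ∈ N, ∃ l ∈ L, n * l = x :=
  mem_sup_of_normal_left.1 (hNL.sup_eq_top ▸ mem_top x)

theorem exists_le_ker_eqOn_of_isCompl [N.Normal] (hNL : IsCompl N L) (ψ : G →* G') :
    ∃ φ : G →* G', N ≤ φ.ker ∧ ∀ l ∈ L, φ l = ψ l := by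
  let ι : L →* G ⧸ N := (QuotientGroup.mk' N).comp L.subtype
  have hι_inj : Injective ι := (injective_iff_map_eq_one ι).2 fun l hl => by
    have hl' : (l : G) ∈ N ⊓ L := ⟨(QuotientGroup.eq_one_iff _).1 hl, l.2⟩
    rw [hNL.inf_eq_bot, mem_bot] at hl'
    exact Subtype.ext hl'
  have hι_surj : Surjective ι := by
    intro q
    obtain ⟨x, rfl⟩ := QuotientGroup.mk'_surjective N q
    obtain ⟨n, hn, l, hl, rfl⟩ := exists_mul_eq_of_isCompl hNL x
    refine ⟨⟨l, hl⟩, ?_⟩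
    simp [ι, (QuotientGroup.eq_one_iff n).2 hn]
  let e := MulEquiv.ofBijective ι ⟨hι_inj, hι_surj⟩
  refine ⟨(ψ.comp L.subtype).comp (e.symm.toMonoidHom.comp (QuotientGroup.mk' N)),
    fun n hn => ?_, fun l hl => ?_⟩
  · simp [MonoidHom.mem_ker, (QuotientGroup.eq_one_iff n).2 hn]
  · show ψ (e.symm (QuotientGroup.mk' N l)) = ψ l
    have he : e.symm (QuotientGroup.mk' N l) = ⟨l, hl⟩ := e.symm_apply_eq.2 rfl
    rw [he]

theorem Subgroup.map_eq_top_of_sup_eq_top {φ : G →* G'} (hNφ : N ≤ φ.ker) (hNL : N ⊔ L = ⊤)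
    (hφ : Surjective φ) : L.map φ = ⊤ := by
  rw [← bot_sup_eq (L.map φ), ← (map_eq_bot_iff N).2 hNφ, ← map_sup, hNL,
    ← MonoidHom.range_eq_map, MonoidHom.range_eq_top.2 hφ]

end Complements

section FGroups

variable {F : Type*} [Group F] {G G' : Type*} [Group G] [Group G']
  [MulDistribMulAction F G] [MulDistribMulAction F G']

theorem IsFHom.comp {G'' : Type*} [Group G''] [MulDistribMulAction F G'']
    {ψ : G' →* G''} {φ : G →* G'} (hψ : IsFHom F ψ) (hφ : IsFHom F φ) :
    IsFHom F (ψ.comp φ) := fun f x => by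
  simp only [MonoidHom.comp_apply, hφ f x, hψ f (φ x)]

theorem IsFHom.isNormalFSubgroup_ker {φ : G →* G'} (hφ : IsFHom F φ) :
    IsNormalFSubgroup F φ.ker :=
  ⟨φ.normal_ker, fun f x hx => by rw [MonoidHom.mem_ker, hφ, MonoidHom.mem_ker.1 hx, smul_one]⟩

theorem IsNormalFSubgroup.comap {K : Subgroup G'} (hK : IsNormalFSubgroup F K) {φ : G →* G'}
    (hφ : IsFHom F φ) : IsNormalFSubgroup F (K.comap φ) :=
  ⟨hK.1.comap φ, fun f x hx => by
    rw [mem_comap, hφ]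
    exact hK.2 f _ hx⟩

theorem IsNormalFSubgroup.map {K : Subgroup G} (hK : IsNormalFSubgroup F K) {φ : G →* G'}
    (hφ : IsFHom F φ) (hφ_surj : Surjective φ) : IsNormalFSubgroup F (K.map φ) :=
  ⟨hK.1.map φ hφ_surj, by
    rintro f _ ⟨x, hx, rfl⟩
    exact ⟨f • x, hK.2 f x hx, hφ f x⟩⟩

theorem IsNormalFSubgroup.sup {K L : Subgroup G} (hK : IsNormalFSubgroup F K)
    (hL : IsNormalFSubgroup F L) : IsNormalFSubgroup F (K ⊔ L) := by
  have := hK.1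
  have := hL.1
  refine ⟨inferInstance, fun f x hx => ?_⟩
  obtain ⟨y, hy, z, hz, rfl⟩ := mem_sup_of_normal_left.1 hx
  rw [smul_mul']
  exact mul_mem_sup (hK.2 f y hy) (hL.2 f z hz)

theorem IsIrreducibleFGroup.isFIso_of_surjective (hG : IsIrreducibleFGroup F G)
    [Nontrivial G'] {θ : G →* G'} (hθ : IsFHom F θ) (hθ_surj : Surjective θ) :
    IsFIso F G G' := by
  rcases hG.2 θ.ker hθ.isNormalFSubgroup_ker with hker | hker
  · exact ⟨MulEquiv.ofBijective θ ⟨(MonoidHom.ker_eq_bot_iff θ).1 hker, hθ_surj⟩, hθ⟩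
  · obtain ⟨q, hq⟩ := exists_ne (1 : G')
    obtain ⟨a, rfl⟩ := hθ_surj q
    exact absurd (hker ▸ mem_top a : a ∈ θ.ker) hq

theorem exists_isFHom_le_ker_eqOn_of_isCompl {N L : Subgroup G} (hN : IsNormalFSubgroup F N)
    (hL : ∀ (f : F) (x : G), x ∈ L → f • x ∈ L) (hNL : IsCompl N L) {ψ : G →* G'}
    (hψ : IsFHom F ψ) : ∃ φ : G →* G', IsFHom F φ ∧ N ≤ φ.ker ∧ ∀ l ∈ L, φ l = ψ l := by
  have := hN.1
  obtain ⟨φ, hNφ, hφL⟩ := exists_le_ker_eqOn_of_isCompl hNL ψ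
  refine ⟨φ, fun f x => ?_, hNφ, hφL⟩
  obtain ⟨n, hn, l, hl, rfl⟩ := exists_mul_eq_of_isCompl hNL x
  rw [smul_mul', map_mul, map_mul, hNφ (hN.2 f n hn), hNφ hn, hφL _ (hL f l hl), hφL l hl, hψ,
    one_mul, one_mul]

end FGroups

section Products

variable {F : Type*} [Group F] {ι : Type*} (H : ι → Type*) [∀ t, Group (H t)]
  [∀ t, MulDistribMulAction F (H t)]

theorem isFHom_mulSingle [DecidableEq ι] (t : ι) :
    IsFHom F (MonoidHom.mulSingle H t) := fun f a => by
  funext s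
  by_cases hs : s = t
  · subst hs
    simp
  · simp [Pi.mulSingle_eq_of_ne hs]

def supportedIn (S : Set ι) : Subgroup (∀ t, H t) :=
  Subgroup.pi Sᶜ fun _ => ⊥

variable {H}

theorem mem_supportedIn {S : Set ι} {p : ∀ t, H t} :
    p ∈ supportedIn H S ↔ ∀ t ∉ S, p t = 1 := by
  simp [supportedIn, mem_pi]

theorem supportedIn_empty : supportedIn H ∅ = ⊥ := by
  simp [supportedIn, pi_bot]

theorem mulSingle_mem_supportedIn [DecidableEq ι] {S : Set ι} {t : ι} (ht : t ∈ S) (a : H t) :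
    Pi.mulSingle t a ∈ supportedIn H S :=
  mem_supportedIn.2 fun _ hs => Pi.mulSingle_eq_of_ne (by rintro rfl; exact hs ht) a

theorem supportedIn_singleton [DecidableEq ι] (t : ι) :
    supportedIn H {t} = (MonoidHom.mulSingle H t).range := by
  ext p
  refine ⟨fun hp => ⟨p t, funext fun s => ?_⟩, ?_⟩
  · by_cases hs : s = t
    · subst hs
      simp
    · simp [Pi.mulSingle_eq_of_ne hs, mem_supportedIn.1 hp s hs]
  · rintro ⟨a, rfl⟩
    exact mulSingle_mem_supportedIn (Set.mem_singleton t) a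

variable (F) in
theorem isNormalFSubgroup_supportedIn (S : Set ι) :
    IsNormalFSubgroup F (supportedIn H S) :=
  ⟨⟨fun p hp g => mem_supportedIn.2 fun t ht => by simp [mem_supportedIn.1 hp t ht]⟩,
    fun f p hp => mem_supportedIn.2 fun t ht => by simp [mem_supportedIn.1 hp t ht]⟩

theorem exists_surjective_comp_mulSingle [Finite ι] [DecidableEq ι] {Q : Type*} [Group Q]
    [MulDistribMulAction F Q] (hQ : IsIrreducibleFGroup F Q) {φ : (∀ t, H t) →* Q}
    (hφ : IsFHom F φ) {U : Set ι} (hU : (supportedIn H U).map φ = ⊤) :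
    ∃ t ∈ U, Surjective (φ.comp (MonoidHom.mulSingle H t)) := by
  have hφ_surj : Surjective φ :=
    MonoidHom.range_eq_top.1 (top_le_iff.1 (hU ▸ map_le_range φ _))
  by_contra! hnot_surj
  have hbot : ∀ t ∈ U, (φ.comp (MonoidHom.mulSingle H t)).range = ⊥ := fun t ht => by
    have hnormal := (isNormalFSubgroup_supportedIn F {t}).map hφ hφ_surj
    rw [supportedIn_singleton, MonoidHom.map_range] at hnormal
    exact (hQ.2 _ hnormal).resolve_right (MonoidHom.range_eq_top.not.2 (hnot_surj t ht))
  have hker : supportedIn H U ≤ φ.ker := fun p hp => pi_mem_of_mulSingle_mem p fun t => by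
    by_cases ht : t ∈ U
    · exact (hbot t ht).le ⟨p t, rfl⟩
    · rw [mem_supportedIn.1 hp t ht, Pi.mulSingle_one]
      exact one_mem _
  have := hQ.1
  exact bot_ne_top (((Subgroup.map_eq_bot_iff _).2 hker).symm.trans hU)

theorem inf_supportedIn_insert_eq_bot [DecidableEq ι] {N : Subgroup (∀ t, H t)} {S : Set ι}
    {t : ι} (hS : N ⊓ supportedIn H S = ⊥)
    (ht : (N ⊔ supportedIn H S).comap (MonoidHom.mulSingle H t) = ⊥) :
    N ⊓ supportedIn H (insert t S) = ⊥ := by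
  refine eq_bot_iff.2 fun n ⟨hnN, hn⟩ => ?_
  have hn_off : ∀ s ∉ S, s ≠ t → n s = 1 := fun s hsS hst =>
    mem_supportedIn.1 hn s (by simp [hst, hsS])
  have hl : n * Pi.mulSingle t (n t)⁻¹ ∈ supportedIn H S := mem_supportedIn.2 fun s hs => by
    by_cases hst : s = t
    · subst hst
      simp
    · simp [Pi.mulSingle_eq_of_ne hst, hn_off s hs hst]
  have hnt : n t = 1 := by
    have hsingle : (n * Pi.mulSingle t (n t)⁻¹)⁻¹ * n = Pi.mulSingle t (n t) := by
      rw [mul_inv_rev, Pi.mulSingle_inv, inv_inv, inv_mul_cancel_right]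
    have : n t ∈ (N ⊔ supportedIn H S).comap (MonoidHom.mulSingle H t) := by
      rw [mem_comap, MonoidHom.mulSingle_apply, ← hsingle]
      exact mul_mem (inv_mem (mem_sup_right hl)) (mem_sup_left hnN)
    rwa [ht, mem_bot] at this
  have hnS : n ∈ supportedIn H S := mem_supportedIn.2 fun s hs => by
    by_cases hst : s = t
    · exact hst ▸ hnt
    · exact hn_off s hs hst
  exact hS ▸ ⟨hnN, hnS⟩

/-- A factor outside `S` meets `N ⊔ supportedIn H S` in a normal `F`-subgroup; by maximality
of `S` it is not trivial, so by irreducibility it is the whole factor. -/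
theorem sup_supportedIn_eq_top_of_maximal [Finite ι] (hH : ∀ t, IsIrreducibleFGroup F (H t))
    {N : Subgroup (∀ t, H t)} (hN : IsNormalFSubgroup F N) {S : Set ι}
    (hS : Maximal (fun S => N ⊓ supportedIn H S = ⊥) S) :
    N ⊔ supportedIn H S = ⊤ := by
  classical
  have hM := hN.sup (isNormalFSubgroup_supportedIn F S)
  refine eq_top_iff.2 fun p _ => pi_mem_of_mulSingle_mem p fun t => ?_
  by_cases ht : t ∈ S
  · exact mem_sup_right (mulSingle_mem_supportedIn ht _)
  rcases (hH t).2 _ (hM.comap (isFHom_mulSingle H t)) with hbot | htop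
  · exact absurd (hS.2 (inf_supportedIn_insert_eq_bot hS.1 hbot) (Set.subset_insert t S)
      (Set.mem_insert t S)) ht
  · exact (htop ▸ mem_top (p t) : p t ∈ _)

theorem exists_surjective_isFHom_le_ker [Finite ι] (hH : ∀ t, IsIrreducibleFGroup F (H t))
    {N : Subgroup (∀ t, H t)} (hN : IsNormalFSubgroup F N) (hN_top : N ≠ ⊤) :
    ∃ t, ∃ φ : (∀ t, H t) →* H t, IsFHom F φ ∧ Surjective φ ∧ N ≤ φ.ker := by
  classical
  obtain ⟨S, hS⟩ := (Set.toFinite {S : Set ι | N ⊓ supportedIn H S = ⊥}).exists_maximal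
    ⟨∅, by simp [supportedIn_empty]⟩
  have hNS : IsCompl N (supportedIn H S) :=
    ⟨disjoint_iff.2 hS.1, codisjoint_iff.2 (sup_supportedIn_eq_top_of_maximal hH hN hS)⟩
  obtain ⟨t, ht⟩ : S.Nonempty := by
    rw [Set.nonempty_iff_ne_empty]
    rintro rfl
    exact hN_top (by simpa [supportedIn_empty] using hNS.sup_eq_top)
  obtain ⟨φ, hφ, hNφ, hφS⟩ := exists_isFHom_le_ker_eqOn_of_isCompl hN
    (isNormalFSubgroup_supportedIn F S).2 hNS (ψ := Pi.evalMonoidHom H t) fun _ _ => rfl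
  refine ⟨t, φ, hφ, fun a => ⟨Pi.mulSingle t a, ?_⟩, hNφ⟩
  simp [hφS _ (mulSingle_mem_supportedIn ht a)]

end Products

section Blocks

variable {κ : Type*} {β : κ → Type*} (G : κ → Type*) [∀ i, Group (G i)]

def piSigmaMulEquiv : (∀ t : Σ i, β i, G t.1) ≃* ∀ i, β i → G i where
  toEquiv := Equiv.piCurry fun i _ => G i
  map_mul' _ _ := rfl

theorem isFHom_piSigmaMulEquiv {F : Type*} [Group F] [∀ i, MulDistribMulAction F (G i)] :
    IsFHom F (piSigmaMulEquiv (β := β) G).toMonoidHom := fun _ _ => rfl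

variable {G}

theorem comap_piSigmaMulEquiv_sup_supportedIn_eq_top {N : Subgroup (∀ i, β i → G i)} {i : κ}
    (hN : N.map (Pi.evalMonoidHom (fun i => β i → G i) i) = ⊤) :
    N.comap (piSigmaMulEquiv G).toMonoidHom ⊔
      supportedIn (fun t : Σ i, β i => G t.1) {t | t.1 ≠ i} = ⊤ := by
  set σ := piSigmaMulEquiv (β := β) G
  refine eq_top_iff.2 fun p _ => ?_
  obtain ⟨n, hn, hni⟩ := hN.symm ▸ mem_top (σ p i)
  rw [← mul_inv_cancel_left (σ.symm n) p]
  refine mul_mem_sup (by simpa using hn) (mem_supportedIn.2 ?_)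
  rintro ⟨i', j⟩ hi'
  obtain rfl : i' = i := not_not.1 hi'
  show (n i' j)⁻¹ * p ⟨i', j⟩ = 1
  rw [show n i' j = p ⟨i', j⟩ from congrFun hni j, inv_mul_cancel]

end Blocks

/-- a normal `F`-subgroup of `∏ᵢ Gᵢ^{mᵢ}` is everything iff each of
its block projections is everything. -/
theorem normalFSubgroup_eq_top_iff_proj_top
    {F : Type*} [Group F] {k : ℕ} (G : Fin k → Type*)
    [∀ i, Group (G i)] [∀ i, MulDistribMulAction F (G i)]
    (hirr : ∀ i, IsIrreducibleFGroup F (G i))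
    (hnoniso : ∀ i j, i ≠ j → ¬ IsFIso F (G i) (G j))
    (m : Fin k → ℕ)
    (N : Subgroup (∀ i, Fin (m i) → G i))
    (hN : IsNormalFSubgroup F N) :
    N = ⊤ ↔ ∀ i,
      Subgroup.map (Pi.evalMonoidHom (fun i => Fin (m i) → G i) i) N = ⊤ := by
  classical
  refine ⟨fun h i => h ▸ map_top_of_surjective _ (surjective_eval i), fun hproj => ?_⟩
  by_contra hN_top
  set σ := piSigmaMulEquiv (β := fun i => Fin (m i)) G
  have hN' : N.comap σ.toMonoidHom ≠ ⊤ := fun h => hN_top <| eq_top_iff.2 fun p _ => by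
    have := h ▸ mem_top (σ.symm p)
    rwa [mem_comap, MulEquiv.coe_toMonoidHom, MulEquiv.apply_symm_apply] at this
  obtain ⟨⟨i, _⟩, φ, hφ, hφ_surj, hNφ⟩ := exists_surjective_isFHom_le_ker (fun t => hirr t.1)
    (hN.comap (isFHom_piSigmaMulEquiv G)) hN'
  obtain ⟨t, hti, ht_surj⟩ := exists_surjective_comp_mulSingle (hirr i) hφ
    (map_eq_top_of_sup_eq_top hNφ (comap_piSigmaMulEquiv_sup_supportedIn_eq_top (hproj i))
      hφ_surj)
  have := (hirr i).1
  exact hnoniso t.1 i hti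
    ((hirr t.1).isFIso_of_surjective (hφ.comp (isFHom_mulSingle _ t)) ht_surj)
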